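/- arXiv:2008.01609 — 3 statements merged into one kernel-verified Lean document; each statement's English description precedes it below -/
import Mathlib

section
/- The Kripke-Kleene branch evaluation B_KK, mapping finite branches to their last element and infinite branches to u (unknown), is monotone and selective with respect to every interpretation. -/
namespace JT

open scoped Classical

/-- Three truth values: 0 = 𝐟, 1 = 𝐮, 2 = 𝐭, with the truth order. -/
abbrev TV := Fin 3

/-- Complement on truth values: swaps 𝐭 and 𝐟, fixes 𝐮. -/
def TV.neg (v : TV) : TV := 2 - v

/-- A justification frame over a fact space `F`. -/
structure JFrame (F : Type) where
  compl : F → F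
  compl_invol : ∀ x, compl (compl x) = x
  tLit : F
  fLit : F
  uLit : F
  compl_t : compl tLit = fLit
  compl_u : compl uLit = uLit
  lit_distinct : tLit ≠ fLit ∧ tLit ≠ uLit ∧ fLit ≠ uLit
  defined : Set F
  defined_compl : ∀ x ∈ defined, compl x ∈ defined
  t_not_def : tLit ∉ defined
  f_not_def : fLit ∉ defined
  u_not_def : uLit ∉ defined
  rules : Set (F × Set F)
  rules_head : ∀ r ∈ rules, r.1 ∈ defined
  rules_body_ne : ∀ r ∈ rules, r.2.Nonempty
  rules_ex : ∀ x ∈ defined, ∃ A : Set F, (x, A) ∈ rules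

variable {F : Type}

def JFrame.openF (JF : JFrame F) : Set F := JF.definedᶜ

/-- A (three-valued) interpretation of the fact space. -/
structure Interp (JF : JFrame F) where
  val : F → TV
  val_compl : ∀ x, val (JF.compl x) = TV.neg (val x)
  val_t : val JF.tLit = 2
  val_f : val JF.fLit = 0
  val_u : val JF.uLit = 1

/-- Branches: finite (the whole finite sequence, as a list) or infinite. -/
inductive Branch (F : Type) where
  | fin : List F → Branch F
  | inf : (ℕ → F) → Branch F

def Branch.startsAt : Branch F → F → Prop
  | .fin l, x => l.head? = some x
  | .inf s, x => s 0 = x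

/-- `b` is a `JF`-branch: an infinite sequence in `F_d`, or a finite nonempty
sequence in `F_d` followed by an open fact. -/
def JFrame.IsBranch (JF : JFrame F) : Branch F → Prop
  | .fin l => 2 ≤ l.length ∧ (∀ a ∈ l.dropLast, a ∈ JF.defined) ∧
      (∀ e, l.getLast? = some e → e ∉ JF.defined)
  | .inf s => ∀ n, s n ∈ JF.defined

/-- Prepend a finite path `p` to a branch. -/
def Branch.prepend (p : List F) : Branch F → Branch F
  | .fin l => .fin (p ++ l)
  | .inf s => .inf (fun n => if h : n < p.length then p.get ⟨n, h⟩ else s (n - p.length))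

/-- Elementwise complement of a branch. -/
def Branch.compl (JF : JFrame F) : Branch F → Branch F
  | .fin l => .fin (l.map JF.compl)
  | .inf s => .inf (fun n => JF.compl (s n))

/-- A branch evaluation is consistent if `B(~b) = ~B(b)`. -/
def JFrame.ConsistentBE (JF : JFrame F) (B : Branch F → F) : Prop :=
  ∀ b : Branch F, JF.IsBranch b → B (Branch.compl JF b) = JF.compl (B b)

/-- A graph-like justification (labels are injective, so nodes are facts). -/
structure GraphJust (JF : JFrame F) where
  nodes : Set F
  edges : Set (F × F)
  edges_mem : ∀ e ∈ edges, e.1 ∈ nodes ∧ e.2 ∈ nodes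
  rule_of_internal : ∀ x ∈ nodes, (∃ y, (x, y) ∈ edges) →
      (x, {y | (x, y) ∈ edges}) ∈ JF.rules

namespace GraphJust
variable {JF : JFrame F}

def LocallyComplete (J : GraphJust JF) : Prop :=
  ∀ x ∈ J.nodes, x ∈ JF.defined → ∃ y, (x, y) ∈ J.edges

def Connected (J : GraphJust JF) : Prop :=
  ∀ x ∈ J.nodes, ∀ y ∈ J.nodes,
    Relation.ReflTransGen (fun a b => (a, b) ∈ J.edges ∨ (b, a) ∈ J.edges) x y

def IsRoot (J : GraphJust JF) (x : F) : Prop :=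
  x ∈ J.nodes ∧ ∀ y ∈ J.nodes, Relation.ReflTransGen (fun a b => (a, b) ∈ J.edges) x y

/-- `J`-branches starting in `x`: maximal paths in `J` from `x`. -/
def IsBranchFrom (J : GraphJust JF) (x : F) : Branch F → Prop
  | .fin l => l.head? = some x ∧ (∀ a ∈ l, a ∈ J.nodes) ∧
      List.Chain' (fun a b => (a, b) ∈ J.edges) l ∧
      (∀ e, l.getLast? = some e → ∀ y, (e, y) ∉ J.edges)
  | .inf s => s 0 = x ∧ (∀ n, s n ∈ J.nodes) ∧ (∀ n, (s n, s (n+1)) ∈ J.edges)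

/-- The value of `x` by `J` under `I`. -/
noncomputable def val (J : GraphJust JF) (B : Branch F → F) (x : F) (I : Interp JF) : TV :=
  ⨅ b ∈ {b | J.IsBranchFrom x b}, I.val (B b)

end GraphJust

/-- Underlying undirected simple graph of a directed relation. -/
def symGraph {α : Type} (e : α → α → Prop) : SimpleGraph α where
  Adj a b := a ≠ b ∧ (e a b ∨ e b a)
  symm := ⟨fun _ _ h => ⟨Ne.symm h.1, h.2.symm⟩⟩
  loopless := ⟨fun _ h => h.1 rfl⟩

/-- A tree-like justification: a directed labelled graph whose underlying
undirected graph is a forest. -/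
structure TreeJust (JF : JFrame F) where
  Node : Type
  edge : Node → Node → Prop
  label : Node → F
  rule_of_internal : ∀ n, (∃ m, edge n m) →
      (label n, {y | ∃ m, edge n m ∧ label m = y}) ∈ JF.rules
  forest : (symGraph edge).IsAcyclic

namespace TreeJust
variable {JF : JFrame F}

def LocallyComplete (T : TreeJust JF) : Prop :=
  ∀ n, T.label n ∈ JF.defined → ∃ m, T.edge n m

def Connected (T : TreeJust JF) : Prop :=
  ∀ a b : T.Node, Relation.ReflTransGen (fun u v => T.edge u v ∨ T.edge v u) a b

def IsRoot (T : TreeJust JF) (x : F) : Prop :=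
  ∃ n, T.label n = x ∧ ∀ m, Relation.ReflTransGen T.edge n m

def IsBranchFrom (T : TreeJust JF) (x : F) : Branch F → Prop
  | .fin l => ∃ ns : List T.Node, List.Chain' T.edge ns ∧ ns.map T.label = l ∧
      l.head? = some x ∧ (∀ nl, ns.getLast? = some nl → ∀ m, ¬ T.edge nl m)
  | .inf s => ∃ ns : ℕ → T.Node, (∀ n, T.edge (ns n) (ns (n+1))) ∧
      (∀ n, T.label (ns n) = s n) ∧ s 0 = x

noncomputable def val (T : TreeJust JF) (B : Branch F → F) (x : F) (I : Interp JF) : TV :=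
  ⨅ b ∈ {b | T.IsBranchFrom x b}, I.val (B b)

end TreeJust

/-- Graph-like supported value. -/
noncomputable def SVg (JF : JFrame F) (B : Branch F → F) (x : F) (I : Interp JF) : TV :=
  if x ∈ JF.defined then
    ⨆ J ∈ {J : GraphJust JF | J.LocallyComplete ∧ x ∈ J.nodes}, J.val B x I
  else I.val x

/-- Tree-like supported value. -/
noncomputable def SVt (JF : JFrame F) (B : Branch F → F) (x : F) (I : Interp JF) : TV :=
  if x ∈ JF.defined then
    ⨆ (T : TreeJust JF) (_ : T.LocallyComplete ∧ ∃ n, T.label n = x), T.val B x I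
  else I.val x

/-! ### Games -/

/-- A game graph: states owned by player 𝐓 (`T`) or by player 𝐅 (`Tᶜ`), edges `E`. -/
structure GameGraph (S : Type) where
  T : Set S
  E : Set (S × S)

namespace GameGraph
variable {S : Type}

def IsPath (G : GameGraph S) (p : List S) : Prop :=
  p ≠ [] ∧ List.Chain' (fun a b => (a, b) ∈ G.E) p

end GameGraph

/-- A general strategy for the player owning the states in `P`. -/
structure GenStrat {S : Type} (G : GameGraph S) (P : Set S) where
  next : List S → S
  next_ok : ∀ p s, G.IsPath p → p.getLast? = some s → s ∈ P →
      (∃ t2, (s, t2) ∈ G.E) → (s, next p) ∈ G.E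

/-- A positional strategy for the player owning the states in `P`. -/
structure PosStrat {S : Type} (G : GameGraph S) (P : Set S) where
  move : S → S
  move_ok : ∀ s ∈ P, (∃ t2, (s, t2) ∈ G.E) → (s, move s) ∈ G.E

/-- The embedding of positional strategies into general strategies. -/
noncomputable def PosStrat.toGen {S : Type} [Nonempty S] {G : GameGraph S} {P : Set S}
    (σ : PosStrat G P) : GenStrat G P where
  next p := σ.move (p.getLastD (Classical.arbitrary S))
  next_ok := by
    intro p s _ hlast hsP hout
    have h : p.getLastD (Classical.arbitrary S) = s := by
      rw [List.getLastD_eq_getLast?, hlast]; rfl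
    show (s, σ.move (p.getLastD (Classical.arbitrary S))) ∈ G.E
    rw [h]; exact σ.move_ok s hsP hout

/-- The finite prefixes of the unique play from `x` consistent with both strategies. -/
noncomputable def GameGraph.playPrefix {S : Type} (G : GameGraph S)
    (σ : GenStrat G G.T) (τ : GenStrat G G.Tᶜ) (x : S) : ℕ → List S
  | 0 => [x]
  | n + 1 =>
    let p := G.playPrefix σ τ x n
    match p.getLast? with
    | none => p
    | some s =>
      if (∃ t2, (s, t2) ∈ G.E) then
        p ++ [if s ∈ G.T then σ.next p else τ.next p]
      else p

/-- The trace of the play from `x`: the state at each time step, if any. -/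
noncomputable def GameGraph.playTrace {S : Type} (G : GameGraph S)
    (σ : GenStrat G G.T) (τ : GenStrat G G.Tᶜ) (x : S) : ℕ → Option S :=
  fun n => (G.playPrefix σ τ x n)[n]?

/-- Value of the play from `x`, for a valuation `v` of plays (given by traces). -/
noncomputable def GameGraph.uval {S V : Type} [CompleteLinearOrder V] (G : GameGraph S)
    (v : (ℕ → Option S) → V) (x : S) (σ : GenStrat G G.T) (τ : GenStrat G G.Tᶜ) : V :=
  v (G.playTrace σ τ x)

/-- Optimal pair of strategies. -/
def GameGraph.OptimalPair {S V : Type} [CompleteLinearOrder V] (G : GameGraph S)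
    (v : (ℕ → Option S) → V) (σs : GenStrat G G.T) (τs : GenStrat G G.Tᶜ) : Prop :=
  ∀ s : S, (∀ σ, G.uval v s σ τs ≤ G.uval v s σs τs) ∧
    (∀ τ, G.uval v s σs τs ≤ G.uval v s σs τ)

/-! ### The justification game -/

/-- Rule symbols `r_{x ← A}`. -/
def RuleSym (JF : JFrame F) : Type := {r : F × Set F // r ∈ JF.rules}

/-- States of the justification game: facts (owned by 𝐓) and rule symbols (owned by 𝐅). -/
abbrev GState (JF : JFrame F) : Type := F ⊕ RuleSym JF

instance (JF : JFrame F) : Nonempty (GState JF) := ⟨Sum.inl JF.tLit⟩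

/-- The game graph `G_JF` associated to a justification frame. -/
def JFrame.game (JF : JFrame F) : GameGraph (GState JF) where
  T := Set.range Sum.inl
  E := {e | (∃ (x : F) (r : RuleSym JF), e = (Sum.inl x, Sum.inr r) ∧ r.1.1 = x) ∨
            (∃ (r : RuleSym JF) (y : F), e = (Sum.inr r, Sum.inl y) ∧ y ∈ r.1.2)}

/-- The `JF`-branch obtained from the play from `s` by filtering out rule symbols. -/
noncomputable def JFrame.playBranch (JF : JFrame F)
    (σ : GenStrat JF.game JF.game.T) (τ : GenStrat JF.game JF.game.Tᶜ)
    (s : GState JF) : Branch F :=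
  if h : ∃ n, JF.game.playPrefix σ τ s (n+1) = JF.game.playPrefix σ τ s n then
    .fin ((JF.game.playPrefix σ τ s (Nat.find h)).filterMap Sum.getLeft?)
  else
    .inf (fun k => ((JF.game.playPrefix σ τ s (2*k+2)).filterMap Sum.getLeft?).getD k JF.tLit)

/-- `u(s, σ, τ) = I(B(b_{play(s,σ,τ)}))`. -/
noncomputable def JFrame.uS (JF : JFrame F) (B : Branch F → F) (I : Interp JF)
    (s : GState JF) (σ : GenStrat JF.game JF.game.T) (τ : GenStrat JF.game JF.game.Tᶜ) : TV :=
  I.val (B (JF.playBranch σ τ s))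

/-- Optimal pair of strategies in the justification game `G_{JS,I}`. -/
def JFrame.OptPair (JF : JFrame F) (B : Branch F → F) (I : Interp JF)
    (σs : GenStrat JF.game JF.game.T) (τs : GenStrat JF.game JF.game.Tᶜ) : Prop :=
  ∀ s : GState JF, (∀ σ, JF.uS B I s σ τs ≤ JF.uS B I s σs τs) ∧
    (∀ τ, JF.uS B I s σs τs ≤ JF.uS B I s σs τ)

/-! ### Play graphs of positional strategies, filtered -/

/-- Steps consistent with a positional strategy for 𝐓. -/
def JFrame.stepT (JF : JFrame F) (σ : PosStrat JF.game JF.game.T)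
    (a b : GState JF) : Prop :=
  (a, b) ∈ JF.game.E ∧ (a ∈ JF.game.T → b = σ.move a)

def JFrame.reachT (JF : JFrame F) (σ : PosStrat JF.game JF.game.T) (x : F) :
    Set (GState JF) :=
  {s | Relation.ReflTransGen (JF.stepT σ) (Sum.inl x) s}

/-- Nodes of the play graph of `σ` at `x` with rule symbols filtered out. -/
def JFrame.filtNodesT (JF : JFrame F) (σ : PosStrat JF.game JF.game.T) (x : F) : Set F :=
  {y | Sum.inl y ∈ JF.reachT σ x}

/-- Edges of the play graph of `σ` at `x` with rule symbols filtered out. -/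
def JFrame.filtEdgesT (JF : JFrame F) (σ : PosStrat JF.game JF.game.T) (x : F) :
    Set (F × F) :=
  {e | ∃ r : RuleSym JF, Sum.inl e.1 ∈ JF.reachT σ x ∧
      JF.stepT σ (Sum.inl e.1) (Sum.inr r) ∧ JF.stepT σ (Sum.inr r) (Sum.inl e.2)}

/-- Steps consistent with a positional strategy for 𝐅. -/
def JFrame.stepF (JF : JFrame F) (τ : PosStrat JF.game JF.game.Tᶜ)
    (a b : GState JF) : Prop :=
  (a, b) ∈ JF.game.E ∧ (a ∈ JF.game.Tᶜ → b = τ.move a)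

def JFrame.reachF (JF : JFrame F) (τ : PosStrat JF.game JF.game.Tᶜ) (x : F) :
    Set (GState JF) :=
  {s | Relation.ReflTransGen (JF.stepF τ) (Sum.inl x) s}

/-- Nodes of the play graph of `τ` at `x`, rule symbols filtered out, labels negated. -/
def JFrame.filtNodesF (JF : JFrame F) (τ : PosStrat JF.game JF.game.Tᶜ) (x : F) : Set F :=
  {w | ∃ y : F, w = JF.compl y ∧ Sum.inl y ∈ JF.reachF τ x}

/-- Edges of the play graph of `τ` at `x`, rule symbols filtered out, labels negated. -/
def JFrame.filtEdgesF (JF : JFrame F) (τ : PosStrat JF.game JF.game.Tᶜ) (x : F) :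
    Set (F × F) :=
  {e | ∃ (y z : F) (r : RuleSym JF), e = (JF.compl y, JF.compl z) ∧
      Sum.inl y ∈ JF.reachF τ x ∧
      JF.stepF τ (Sum.inl y) (Sum.inr r) ∧ JF.stepF τ (Sum.inr r) (Sum.inl z)}

/-! ### Complementation -/

/-- A selection function for `x` chooses an element from the body of each rule of `x`. -/
def JFrame.SelectionFn (JF : JFrame F) (x : F) : Type :=
  {s : {A : Set F // (x, A) ∈ JF.rules} → F // ∀ A, s A ∈ A.1}

/-- `JF` is complementary: fixed under complementation, i.e. for each defined `x` and
selection function `s` for `x`, the rule `~x ← ~Im(s)` belongs to the rules. -/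
def JFrame.Complementary (JF : JFrame F) : Prop :=
  ∀ x ∈ JF.defined, ∀ s : JF.SelectionFn x,
    (JF.compl x, JF.compl '' Set.range s.1) ∈ JF.rules

/-! ### Monotone, selective, transitive branch evaluations -/

/-- Monotone branch evaluation. -/
def JFrame.MonotoneBE (JF : JFrame F) (B : Branch F → F) : Prop :=
  ∀ (I : Interp JF) (x : F), x ∈ JF.defined →
    ∀ b1 b2 : Branch F, JF.IsBranch b1 → JF.IsBranch b2 →
      b1.startsAt x → b2.startsAt x →
      ∀ p : List F, (∀ a ∈ p, a ∈ JF.defined) →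
        I.val (B b1) ≤ I.val (B b2) →
        I.val (B (Branch.prepend p b1)) ≤ I.val (B (Branch.prepend p b2))

/-- Transitive branch evaluation: dropping the first element of a branch with at
least three elements does not change its value. -/
def JFrame.TransitiveBE (JF : JFrame F) (B : Branch F → F) : Prop :=
  ∀ (x0 : F) (b : Branch F), JF.IsBranch b → B (Branch.prepend [x0] b) = B b

/-- A finite loop starting in `x`. -/
def JFrame.IsLoopAt (JF : JFrame F) (x : F) (q : List F) : Prop :=
  q.head? = some x ∧ ∀ a ∈ q, a ∈ JF.defined

/-- Finite iterations of loops from `L`. -/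
def FinIter (L : Set (List F)) : Set (List F) :=
  {w | ∃ ls : List (List F), (∀ l ∈ ls, l ∈ L) ∧ w = ls.flatten}

/-- `s` is the concatenation of the infinite sequence of lists `f`. -/
def IsConcat (f : ℕ → List F) (s : ℕ → F) : Prop :=
  ∃ c : ℕ → ℕ, c 0 = 0 ∧ (∀ i, c (i+1) = c i + (f i).length) ∧
    ∀ i k (h : k < (f i).length), s (c i + k) = (f i).get ⟨k, h⟩

/-- `L^ω`: infinite iterations of loops from `L`, as branches. -/
def InfIter (L : Set (List F)) : Set (Branch F) :=
  {b | ∃ (f : ℕ → List F) (s : ℕ → F), (∀ i, f i ∈ L) ∧ (∀ i, f i ≠ []) ∧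
      IsConcat f s ∧ b = .inf s}

/-- `p L* K`. -/
def StarKSet (p : List F) (L : Set (List F)) (K : Set (Branch F)) : Set (Branch F) :=
  {b | ∃ w ∈ FinIter L, ∃ k ∈ K, b = Branch.prepend (p ++ w) k}

/-- `p L^ω`. -/
def OmegaSet (p : List F) (L : Set (List F)) : Set (Branch F) :=
  {b | ∃ b0 ∈ InfIter L, b = Branch.prepend p b0}

/-- `p K`. -/
def PrepSet (p : List F) (K : Set (Branch F)) : Set (Branch F) :=
  (Branch.prepend p) '' K

/-- Selective branch evaluation with respect to `I`. -/
def JFrame.SelectiveBE (JF : JFrame F) (B : Branch F → F) (I : Interp JF) : Prop :=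
  ∀ p : List F, (∀ a ∈ p, a ∈ JF.defined) →
  ∀ x ∈ JF.defined,
  ∀ M N : Set (List F), (∀ q ∈ M, JF.IsLoopAt x q) → (∀ q ∈ N, JF.IsLoopAt x q) →
  ∀ K : Set (Branch F), (∀ b ∈ K, JF.IsBranch b ∧ b.startsAt x) →
  ∀ b ∈ StarKSet p (M ∪ N) K ∪ OmegaSet p (M ∪ N),
    (∃ bs ∈ OmegaSet p M ∪ OmegaSet p N ∪ PrepSet p K, I.val (B bs) ≤ I.val (B b)) ∧
    (∃ bu ∈ OmegaSet p M ∪ OmegaSet p N ∪ PrepSet p K, I.val (B b) ≤ I.val (B bu))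

/-! ### Concrete branch evaluations -/

/-- Supported (completion) branch evaluation: maps a branch to its second element. -/
def Bsp (JF : JFrame F) : Branch F → F
  | .fin l => l[1]?.getD JF.uLit
  | .inf s => s 1

/-- Kripke-Kleene branch evaluation. -/
def Bkk (JF : JFrame F) : Branch F → F
  | .fin l => l.getLastD JF.uLit
  | .inf _ => JF.uLit

/-- A sign function; `true` means positive, `false` negative. -/
structure SignFn (JF : JFrame F) where
  sgn : F → Bool
  sgn_compl : ∀ x ∈ JF.defined, sgn (JF.compl x) ≠ sgn x

/-- Well-founded branch evaluation. -/
noncomputable def Bwf (JF : JFrame F) (sg : SignFn JF) : Branch F → F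
  | .fin l => l.getLastD JF.uLit
  | .inf s =>
    if ∃ n, ∀ i ≥ n, sg.sgn (s i) = false then JF.tLit
    else if ∃ n, ∀ i ≥ n, sg.sgn (s i) = true then JF.fLit
    else JF.uLit

/-- Stable branch evaluation. -/
noncomputable def Bst (JF : JFrame F) (sg : SignFn JF) : Branch F → F
  | .fin l =>
    match l with
    | [] => JF.uLit
    | x0 :: rest =>
      match rest.find? (fun y => sg.sgn y != sg.sgn x0) with
      | some y => y
      | none => Bwf JF sg (.fin (x0 :: rest))
  | .inf s =>
    if h : ∃ i, sg.sgn (s i) ≠ sg.sgn (s 0) then s (Nat.find h)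
    else Bwf JF sg (.inf s)

end JT

/-!
`Bkk` sees only the last element of a finite branch, so prepending a path never changes the
value: this gives monotonicity, and a branch of `p (M ∪ N)* K` has the value of its tail in
`p K`. Every infinite branch has value `u`, so a branch of `p (M ∪ N)^ω` is matched by `p q^ω`
for any nonempty loop `q` it uses.
-/

namespace JT

variable {F : Type}

lemma JFrame.IsBranch.ne_fin_nil {JF : JFrame F} {b : Branch F} (hb : JF.IsBranch b) :
    b ≠ .fin [] := by
  rintro rfl
  simp [JFrame.IsBranch] at hb

lemma Bkk_prepend (JF : JFrame F) (p : List F) {b : Branch F} (hb : b ≠ .fin []) :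
    Bkk JF (b.prepend p) = Bkk JF b := by
  cases b with
  | fin l =>
    have hl : l ≠ [] := fun h => hb (h ▸ rfl)
    simp only [Branch.prepend, Bkk, List.getLastD_eq_getLast?, List.getLast?_append_of_ne_nil _ hl]
  | inf s => rfl

lemma Bkk_of_mem_omegaSet (JF : JFrame F) {p : List F} {L : Set (List F)} {b : Branch F}
    (hb : b ∈ OmegaSet p L) : Bkk JF b = JF.uLit := by
  obtain ⟨_, ⟨_, s, -, -, -, rfl⟩, rfl⟩ := hb
  rfl

lemma exists_ne_nil_of_mem_omegaSet {p : List F} {L : Set (List F)} {b : Branch F}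
    (hb : b ∈ OmegaSet p L) : ∃ q ∈ L, q ≠ [] := by
  obtain ⟨_, ⟨f, -, hf, hf0, -, -⟩, -⟩ := hb
  exact ⟨f 0, hf 0, hf0 0⟩

/-- The witness is `q^ω`, the periodic sequence `n ↦ q[n % |q|]`. -/
lemma omegaSet_nonempty (p : List F) {L : Set (List F)} {q : List F} (hq : q ∈ L)
    (hq0 : q ≠ []) : (OmegaSet p L).Nonempty := by
  have hpos : 0 < q.length := List.length_pos_iff.mpr hq0
  have hconcat : IsConcat (fun _ => q) (fun n => q[n % q.length]'(Nat.mod_lt n hpos)) := by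
    refine ⟨fun i => i * q.length, by simp, fun i => by ring, fun i k hk => ?_⟩
    simp [Nat.add_comm, Nat.mod_eq_of_lt hk]
  exact ⟨_, _, ⟨_, _, fun _ => hq, fun _ => hq0, hconcat, rfl⟩, rfl⟩

theorem stmt15 {F : Type} (JF : JFrame F) :
    JF.MonotoneBE (Bkk JF) ∧ ∀ I : Interp JF, JF.SelectiveBE (Bkk JF) I := by
  refine ⟨fun I x _ b1 b2 hb1 hb2 _ _ p _ hle => ?_, fun I p _ x _ M N _ _ K hK b hb => ?_⟩
  · rwa [Bkk_prepend JF p hb1.ne_fin_nil, Bkk_prepend JF p hb2.ne_fin_nil]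
  suffices ∃ b' ∈ OmegaSet p M ∪ OmegaSet p N ∪ PrepSet p K, Bkk JF b' = Bkk JF b by
    obtain ⟨b', hb', heq⟩ := this
    exact ⟨⟨b', hb', (congrArg I.val heq).le⟩, ⟨b', hb', (congrArg I.val heq).ge⟩⟩
  rcases hb with ⟨w, -, k, hk, rfl⟩ | hb
  · have hk0 := (hK k hk).1.ne_fin_nil
    exact ⟨k.prepend p, Or.inr ⟨k, hk, rfl⟩, by rw [Bkk_prepend JF p hk0, Bkk_prepend JF _ hk0]⟩
  · obtain ⟨q, hq | hq, hq0⟩ := exists_ne_nil_of_mem_omegaSet hb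
    · obtain ⟨b', hb'⟩ := omegaSet_nonempty p hq hq0
      exact ⟨b', Or.inl (Or.inl hb'), by rw [Bkk_of_mem_omegaSet JF hb', Bkk_of_mem_omegaSet JF hb]⟩
    · obtain ⟨b', hb'⟩ := omegaSet_nonempty p hq hq0
      exact ⟨b', Or.inl (Or.inr hb'), by rw [Bkk_of_mem_omegaSet JF hb', Bkk_of_mem_omegaSet JF hb]⟩

end JT
end

section
/- Given a sign function on the justification frame, the well-founded branch evaluation B_wf — mapping finite branches to their last element, infinite branches with a negative tail to t, infinite branches with a positive tail to f, and other infinite branches to u — is monotone and selective with respect to every interpretation. -/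
namespace JT

/-!
Prepending a finite path changes neither the last element of a finite branch nor the tail
of an infinite one, so `Bwf` ignores prefixes: this gives monotonicity and settles the
branches of `p(M ∪ N)*K`. An infinite concatenation of loops at `x` passes through `x`
infinitely often, so the only possible eventual sign is that of `x`. Either the tail has that
sign, and then so does every loop lying inside the tail, or some loop contains both signs;
in both cases repeating that one loop gives a branch of `pM^ω ∪ pN^ω` with the same value.
-/

open Filter

section
variable {F : Type}

def periodicSeq (q : List F) (hq : q ≠ []) : ℕ → F :=
  fun n => q[n % q.length]'(Nat.mod_lt _ (List.length_pos_iff.mpr hq))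

lemma periodicSeq_mul_add (q : List F) (hq : q ≠ []) (i k : ℕ) (hk : k < q.length) :
    periodicSeq q hq (i * q.length + k) = q[k] := by
  simp only [periodicSeq, Nat.mul_add_mod_self_right, Nat.mod_eq_of_lt hk]

lemma isConcat_periodicSeq (q : List F) (hq : q ≠ []) :
    IsConcat (fun _ => q) (periodicSeq q hq) :=
  ⟨fun i => i * q.length, by simp, fun i => by ring, periodicSeq_mul_add q hq⟩

lemma eventually_periodicSeq_iff (q : List F) (hq : q ≠ []) (P : F → Prop) :
    (∀ᶠ n in atTop, P (periodicSeq q hq n)) ↔ ∀ a ∈ q, P a := by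
  constructor
  · intro h a ha
    obtain ⟨k, hk, rfl⟩ := List.getElem_of_mem ha
    obtain ⟨N, hN⟩ := eventually_atTop.1 h
    have hlen : 0 < q.length := List.length_pos_iff.mpr hq
    simpa only [periodicSeq_mul_add q hq N k hk] using
      hN (N * q.length + k) (le_add_right (Nat.le_mul_of_pos_right N hlen))
  · exact fun h => Eventually.of_forall fun n => h _ (List.getElem_mem _)

namespace IsConcat

variable {f : ℕ → List F} {c : ℕ → ℕ}

lemma self_le_of_ne_nil (hcs : ∀ i, c (i + 1) = c i + (f i).length) (hne : ∀ i, f i ≠ [])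
    (i : ℕ) : i ≤ c i := by
  induction i with
  | zero => omega
  | succ n ih => have := List.length_pos_iff.mpr (hne n); rw [hcs]; omega

lemma exists_add_eq (hc0 : c 0 = 0) (hcs : ∀ i, c (i + 1) = c i + (f i).length)
    (hne : ∀ i, f i ≠ []) (m : ℕ) : ∃ i k, k < (f i).length ∧ c i + k = m := by
  induction m with
  | zero => exact ⟨0, 0, List.length_pos_iff.mpr (hne 0), by simp [hc0]⟩
  | succ m ih =>
    obtain ⟨i, k, hk, rfl⟩ := ih
    by_cases hlt : k + 1 < (f i).length
    · exact ⟨i, k + 1, hlt, by omega⟩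
    · exact ⟨i + 1, 0, List.length_pos_iff.mpr (hne _), by rw [hcs]; omega⟩

variable {s : ℕ → F}

lemma exists_eventually_iff_forall_mem (h : IsConcat f s) (hne : ∀ i, f i ≠ [])
    (P : F → Prop) : ∃ i, (∀ᶠ n in atTop, P (s n)) ↔ ∀ a ∈ f i, P a := by
  obtain ⟨c, hc0, hcs, hval⟩ := h
  by_cases hP : ∀ᶠ n in atTop, P (s n)
  · obtain ⟨N, hN⟩ := eventually_atTop.1 hP
    refine ⟨N, iff_of_true hP fun a ha => ?_⟩
    obtain ⟨k, hk, rfl⟩ := List.getElem_of_mem ha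
    simpa [hval N k hk] using hN (c N + k) (le_add_right (self_le_of_ne_nil hcs hne N))
  · obtain ⟨m, hm⟩ := (not_eventually.1 hP).exists
    obtain ⟨i, k, hk, rfl⟩ := exists_add_eq hc0 hcs hne m
    refine ⟨i, iff_of_false hP fun hall => hm ?_⟩
    rw [hval i k hk]
    exact hall _ (List.get_mem _ _)

lemma frequently_eq (h : IsConcat f s) (hne : ∀ i, f i ≠ []) {x : F}
    (hx : ∀ i, (f i).head? = some x) : ∃ᶠ n in atTop, s n = x := by
  obtain ⟨c, -, hcs, hval⟩ := h
  refine frequently_atTop.2 fun N => ⟨c N, self_le_of_ne_nil hcs hne N, ?_⟩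
  have hlen := List.length_pos_iff.mpr (hne N)
  rw [← add_zero (c N), hval N 0 hlen, List.get_eq_getElem, List.getElem_zero]
  exact Option.some_injective _ ((List.head?_eq_some_head _).symm.trans (hx N))

end IsConcat

variable (JF : JFrame F) (sg : SignFn JF)

lemma Bwf_inf_congr {s t : ℕ → F}
    (h : ∀ v, (∀ᶠ n in atTop, sg.sgn (s n) = v) ↔ ∀ᶠ n in atTop, sg.sgn (t n) = v) :
    Bwf JF sg (.inf s) = Bwf JF sg (.inf t) := by
  have h' : ∀ v, (∃ n, ∀ i ≥ n, sg.sgn (s i) = v) ↔ ∃ n, ∀ i ≥ n, sg.sgn (t i) = v :=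
    fun v => by simpa only [eventually_atTop] using h v
  classical
  exact if_congr (h' false) rfl (if_congr (h' true) rfl rfl)

lemma Bwf_prepend_inf (p : List F) (s : ℕ → F) :
    Bwf JF sg (Branch.prepend p (.inf s)) = Bwf JF sg (.inf s) := by
  refine Bwf_inf_congr JF sg fun v => ?_
  conv_lhs => rw [← map_add_atTop_eq_nat p.length, eventually_map]
  simp

lemma Bwf_prepend_fin (p : List F) {l : List F} (hl : l ≠ []) :
    Bwf JF sg (Branch.prepend p (.fin l)) = Bwf JF sg (.fin l) := by
  show Bwf JF sg (.fin (p ++ l)) = _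
  simp [Bwf, List.getLastD_eq_getLast?, List.getLast?_append, Option.or_of_isSome, hl]

lemma Bwf_prepend_of_isBranch (p : List F) {b : Branch F} (hb : JF.IsBranch b) :
    Bwf JF sg (Branch.prepend p b) = Bwf JF sg b := by
  cases b with
  | fin l => exact Bwf_prepend_fin JF sg p (List.ne_nil_of_length_pos (zero_lt_two.trans_le hb.1))
  | inf s => exact Bwf_prepend_inf JF sg p s

lemma exists_Bwf_periodicSeq_eq {f : ℕ → List F} {s : ℕ → F} (hs : IsConcat f s)
    (hne : ∀ i, f i ≠ []) {x : F} (hx : ∀ i, (f i).head? = some x) :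
    ∃ i, Bwf JF sg (.inf (periodicSeq (f i) (hne i))) = Bwf JF sg (.inf s) := by
  obtain ⟨i, hi⟩ := hs.exists_eventually_iff_forall_mem hne (fun a => sg.sgn a = sg.sgn x)
  have hx_mem : x ∈ f i := List.mem_of_mem_head? (hx i)
  refine ⟨i, Bwf_inf_congr JF sg fun v => ?_⟩
  refine (eventually_periodicSeq_iff _ _ (fun a => sg.sgn a = v)).trans ?_
  by_cases hv : v = sg.sgn x
  · subst hv; exact hi.symm
  · refine iff_of_false (fun hall => hv (hall x hx_mem).symm) fun hev => hv ?_
    obtain ⟨n, hn, hsn⟩ := ((hs.frequently_eq hne hx).and_eventually hev).exists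
    rw [← hn, hsn]

lemma exists_Bwf_eq_of_mem_starKSet {p : List F} {L : Set (List F)} {K : Set (Branch F)}
    (hK : ∀ k ∈ K, JF.IsBranch k) {b : Branch F} (hb : b ∈ StarKSet p L K) :
    ∃ b' ∈ PrepSet p K, Bwf JF sg b' = Bwf JF sg b := by
  obtain ⟨w, -, k, hk, rfl⟩ := hb
  refine ⟨_, ⟨k, hk, rfl⟩, ?_⟩
  rw [Bwf_prepend_of_isBranch JF sg _ (hK k hk), Bwf_prepend_of_isBranch JF sg _ (hK k hk)]

lemma exists_Bwf_eq_of_mem_omegaSet {p : List F} {x : F} {M N : Set (List F)}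
    (hM : ∀ q ∈ M, q.head? = some x) (hN : ∀ q ∈ N, q.head? = some x) {b : Branch F}
    (hb : b ∈ OmegaSet p (M ∪ N)) :
    ∃ b' ∈ OmegaSet p M ∪ OmegaSet p N, Bwf JF sg b' = Bwf JF sg b := by
  obtain ⟨-, ⟨f, s, hf, hne, hs, rfl⟩, rfl⟩ := hb
  obtain ⟨i, hi⟩ :=
    exists_Bwf_periodicSeq_eq JF sg hs hne fun i => (hf i).elim (hM _) (hN _)
  have hmem : ∀ L, f i ∈ L →
      Branch.prepend p (.inf (periodicSeq (f i) (hne i))) ∈ OmegaSet p L :=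
    fun L hL => ⟨_, ⟨_, _, fun _ => hL, fun _ => hne i, isConcat_periodicSeq _ _, rfl⟩, rfl⟩
  refine ⟨_, (hf i).imp (hmem M) (hmem N), ?_⟩
  rw [Bwf_prepend_inf, Bwf_prepend_inf, hi]

lemma JFrame.monotoneBE_of_forall_prepend_eq {B : Branch F → F}
    (h : ∀ p b, JF.IsBranch b → B (Branch.prepend p b) = B b) : JF.MonotoneBE B := by
  intro I x _ b1 b2 hb1 hb2 _ _ p _ hle
  rwa [h p b1 hb1, h p b2 hb2]

end

theorem stmt16 {F : Type} (JF : JFrame F) (sg : SignFn JF) :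
    JF.MonotoneBE (Bwf JF sg) ∧ ∀ I : Interp JF, JF.SelectiveBE (Bwf JF sg) I := by
  refine ⟨JF.monotoneBE_of_forall_prepend_eq fun p _ hb => Bwf_prepend_of_isBranch JF sg p hb, ?_⟩
  intro I p _ x _ M N hM hN K hK b hb
  obtain ⟨b', hb', he⟩ : ∃ b' ∈ OmegaSet p M ∪ OmegaSet p N ∪ PrepSet p K,
      Bwf JF sg b' = Bwf JF sg b := by
    rcases hb with hb | hb
    · obtain ⟨b', hb', he⟩ :=
        exists_Bwf_eq_of_mem_starKSet JF sg (fun k hk => (hK k hk).1) hb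
      exact ⟨b', Or.inr hb', he⟩
    · obtain ⟨b', hb', he⟩ := exists_Bwf_eq_of_mem_omegaSet JF sg
        (fun q hq => (hM q hq).1) (fun q hq => (hN q hq).1) hb
      exact ⟨b', Or.inl hb', he⟩
  exact ⟨⟨b', hb', by rw [he]⟩, ⟨b', hb', by rw [he]⟩⟩

end JT
end

section
/- Given a sign function on the justification frame, the stable branch evaluation B_st — mapping a branch x0 → x1 → ... to the first element whose sign differs from that of x0 if such exists, and otherwise to B_wf of the branch — is monotone and selective with respect to every interpretation. -/
/-!
Prepending a path `a :: t` to a branch `c` that starts at `z` gives a branch whose stable value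
is the first element of `t` with a sign different from that of `a`, if there is one; otherwise it
is `z` if the signs of `z` and `a` differ, and `B_st c` if they agree. So the value of `p → c`
depends on `c` only through its first element and `B_st c`, which is monotonicity.

For selectivity, a loop at `x` either has constant sign, and is then invisible in front of any
branch starting at `x`, or contains a sign change, and then fixes the value of every branch it
starts, in particular of its own infinite repetition `q^ω`. Hence every branch of
`p(M ∪ N)*K ∪ p(M ∪ N)^ω` has the same value as some `pk` or `pq^ω`. The remaining case is
an infinite iteration of loops of constant sign: it has constant sign, so its value, like that
of any `q^ω` for one of its loops, is `t` or `f` according to that sign.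
-/

namespace JT

section

variable {F : Type}

namespace Branch

theorem prepend_nil (c : Branch F) : prepend [] c = c := by
  cases c <;> simp [prepend]

theorem prepend_inf (p : List F) (s : Stream' F) : prepend p (.inf s) = .inf (p ++ₛ s) := by
  simp only [prepend]
  congr 1
  funext n
  rcases lt_or_ge n p.length with hn | hn
  · rw [dif_pos hn, List.get_eq_getElem]
    exact (Stream'.get_append_left n p s hn).symm
  · obtain ⟨k, rfl⟩ := Nat.exists_eq_add_of_le hn
    rw [dif_neg (by omega), Nat.add_sub_cancel_left]
    exact (Stream'.get_append_right k p s).symm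

theorem prepend_append (u v : List F) (c : Branch F) :
    prepend (u ++ v) c = prepend u (prepend v c) := by
  cases c with
  | fin l => simp [prepend]
  | inf s =>
    rw [prepend_inf _ s, prepend_inf _ s, prepend_inf]
    exact congrArg inf (Stream'.append_append_stream u v s)

theorem startsAt_prepend_cons (a : F) (l : List F) (c : Branch F) :
    (prepend (a :: l) c).startsAt a := by
  cases c <;> simp [prepend, startsAt]

def cycle (x : F) (t : List F) : Branch F :=
  .inf (Stream'.cycle (x :: t) (List.cons_ne_nil x t))

theorem prepend_cycle (x : F) (t : List F) : (cycle x t).prepend (x :: t) = cycle x t := by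
  rw [cycle, prepend_inf]
  exact congrArg inf (Stream'.cycle_eq _ _).symm

theorem startsAt_cycle (x : F) (t : List F) : (cycle x t).startsAt x := by
  rw [← prepend_cycle]
  exact startsAt_prepend_cons x t _

end Branch

theorem IsConcat.eq_append {f : ℕ → List F} {s : Stream' F} (h : IsConcat f s) :
    s = f 0 ++ₛ Stream'.drop (f 0).length s := by
  obtain ⟨c, hc0, -, hget⟩ := h
  have htake : Stream'.take (f 0).length s = f 0 := by
    refine List.ext_getElem (Stream'.length_take _ _) fun k _ hk => ?_
    have hk' := hget 0 k hk
    rw [hc0, zero_add] at hk'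
    rw [Stream'.take_get]
    exact hk'
  calc s = Stream'.take (f 0).length s ++ₛ Stream'.drop (f 0).length s :=
        (Stream'.append_take_drop _ s).symm
    _ = _ := by rw [htake]

theorem IsConcat.drop {f : ℕ → List F} {s : Stream' F} (h : IsConcat f s) :
    IsConcat (fun i => f (i + 1)) (Stream'.drop (f 0).length s) := by
  obtain ⟨c, hc0, hcs, hget⟩ := h
  have hc1 : c 1 = (f 0).length := by rw [hcs, hc0, zero_add]
  have hmono : Monotone c := monotone_nat_of_le_succ fun i => by rw [hcs]; omega
  have hge : ∀ i, (f 0).length ≤ c (i + 1) := fun i => hc1 ▸ hmono (by omega)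
  refine ⟨fun i => c (i + 1) - (f 0).length, by simp [hc1], fun i => ?_, fun i k hk => ?_⟩
  · have := hge i
    simp only [hcs (i + 1)]
    omega
  · rw [← hget (i + 1) k hk]
    show s (c (i + 1) - (f 0).length + k + (f 0).length) = _
    congr 1
    have := hge i
    omega

theorem IsConcat.forall_of_forall_mem {f : ℕ → List F} {s : Stream' F} (h : IsConcat f s)
    (hne : ∀ i, f i ≠ []) {P : F → Prop} (hP : ∀ i, ∀ a ∈ f i, P a) (n : ℕ) :
    P (s n) := by
  induction n using Nat.strong_induction_on generalizing f s with
  | _ n ih =>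
    rw [h.eq_append]
    show P ((f 0 ++ₛ _).get n)
    by_cases hn : n < (f 0).length
    · rw [Stream'.get_append_left n _ _ hn]
      exact hP 0 _ (List.getElem_mem hn)
    · obtain ⟨k, rfl⟩ := Nat.exists_eq_add_of_le (not_lt.1 hn)
      rw [Stream'.get_append_right]
      have hpos := List.length_pos_iff.2 (hne 0)
      exact ih k (by omega) h.drop (fun _ => hne _) fun _ => hP _

theorem isConcat_cycle (q : List F) (hq : q ≠ []) :
    IsConcat (fun _ => q) (Stream'.cycle q hq) := by
  have hdrop : ∀ i, Stream'.drop (i * q.length) (Stream'.cycle q hq) = Stream'.cycle q hq := by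
    intro i
    induction i with
    | zero => rw [zero_mul]; rfl
    | succ i ih =>
      have hperiod : Stream'.drop q.length (Stream'.cycle q hq) = Stream'.cycle q hq := by
        conv_lhs => rw [Stream'.cycle_eq]
        exact Stream'.drop_append_stream _ _
      rw [Nat.succ_mul, add_comm, ← Stream'.drop_drop, hperiod, ih]
  refine ⟨fun i => i * q.length, zero_mul _, fun i => Nat.succ_mul _ _, fun i k hk => ?_⟩
  show (Stream'.cycle q hq).get (i * q.length + k) = q.get ⟨k, hk⟩
  rw [← Stream'.get_drop k, hdrop, Stream'.cycle_eq, Stream'.get_append_left k _ _ hk]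
  rfl

theorem IsConcat.startsAt {x : F} {f : ℕ → List F} {s : Stream' F} (h : IsConcat f s)
    (hx : (f 0).head? = some x) : (Branch.inf s).startsAt x := by
  obtain ⟨t, ht⟩ := List.head?_eq_some_iff.1 hx
  show s 0 = x
  rw [h.eq_append, ht]
  rfl

theorem cycle_mem_InfIter {x : F} {t : List F} {L : Set (List F)} (h : x :: t ∈ L) :
    Branch.cycle x t ∈ InfIter L :=
  ⟨fun _ => x :: t, _, fun _ => h, fun _ => List.cons_ne_nil x t, isConcat_cycle _ _, rfl⟩

variable {JF : JFrame F} {sg : SignFn JF}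

theorem Bst_inf_of_forall_sgn_eq {s : ℕ → F} {σ : Bool} (hs : ∀ n, sg.sgn (s n) = σ) :
    Bst JF sg (.inf s) = cond σ JF.fLit JF.tLit := by
  cases σ
  · simp [Bst, Bwf, hs]
  · simpa [Bst, Bwf, hs] using fun n h => absurd (h n) n.lt_irrefl

theorem Bwf_inf_cons (a : F) (s : Stream' F) :
    Bwf JF sg (.inf (Stream'.cons a s)) = Bwf JF sg (.inf s) := by
  have key : ∀ v, (∃ n, ∀ i ≥ n, sg.sgn (Stream'.cons a s i) = v) ↔
      ∃ n, ∀ i ≥ n, sg.sgn (s i) = v := by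
    intro v
    simp only [← Filter.eventually_atTop]
    conv_lhs => rw [← Filter.map_add_atTop_eq_nat 1, Filter.eventually_map]
    rfl
  simp only [Bwf]
  rw [key, key]

theorem Bst_inf_cons (a : F) (s : Stream' F) :
    Bst JF sg (.inf (Stream'.cons a s)) =
      if sg.sgn (s 0) = sg.sgn a then Bst JF sg (.inf s) else s 0 := by
  split_ifs with h
  · have hshift : ∀ i, sg.sgn (Stream'.cons a s (i + 1)) ≠ sg.sgn (Stream'.cons a s 0) ↔
        sg.sgn (s i) ≠ sg.sgn (s 0) := fun i => by rw [h]; rfl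
    have hex : (∃ i, sg.sgn (Stream'.cons a s i) ≠ sg.sgn (Stream'.cons a s 0)) ↔
        ∃ i, sg.sgn (s i) ≠ sg.sgn (s 0) := by
      constructor
      · rintro ⟨_ | i, hi⟩
        · exact absurd rfl hi
        · exact ⟨i, (hshift i).1 hi⟩
      · rintro ⟨i, hi⟩
        exact ⟨i + 1, (hshift i).2 hi⟩
    by_cases hne : ∃ i, sg.sgn (s i) ≠ sg.sgn (s 0)
    · have hfind : Nat.find (hex.2 hne) = Nat.find hne + 1 := by
        rw [Nat.find_eq_iff]
        refine ⟨(hshift _).2 (Nat.find_spec hne), ?_⟩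
        rintro (_ | n) hn
        · exact not_not.2 rfl
        · exact fun hP => Nat.find_min hne (by omega) ((hshift n).1 hP)
      simp only [Bst, dif_pos hne, dif_pos (hex.2 hne), hfind]
      rfl
    · simp only [Bst, dif_neg hne, dif_neg (mt hex.1 hne), Bwf_inf_cons]
  · have hex : ∃ i, sg.sgn (Stream'.cons a s i) ≠ sg.sgn (Stream'.cons a s 0) := ⟨1, h⟩
    have hfind : Nat.find hex = 1 := (Nat.find_eq_iff hex).2 ⟨h, by simp⟩
    simp only [Bst, dif_pos hex, hfind]
    rfl

theorem Bst_prepend_singleton {a z : F} {c : Branch F} (hc : c.startsAt z) :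
    Bst JF sg (c.prepend [a]) = if sg.sgn z = sg.sgn a then Bst JF sg c else z := by
  cases c with
  | fin l =>
    obtain ⟨r, rfl⟩ := List.head?_eq_some_iff.mp hc
    by_cases h : sg.sgn z = sg.sgn a
    · simp [Branch.prepend, Bst, h, Bwf]
    · simp [Branch.prepend, Bst, h]
  | inf s =>
    rw [Branch.prepend_inf [a] s, ← hc]
    exact Bst_inf_cons a s

theorem Bst_prepend_cons {a z : F} (t : List F) {c : Branch F} (hc : c.startsAt z) :
    Bst JF sg (c.prepend (a :: t)) =
      (t.find? fun y => sg.sgn y != sg.sgn a).getD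
        (if sg.sgn z = sg.sgn a then Bst JF sg c else z) := by
  induction t generalizing a with
  | nil => exact Bst_prepend_singleton hc
  | cons b t ih =>
    rw [← List.singleton_append, Branch.prepend_append,
      Bst_prepend_singleton (Branch.startsAt_prepend_cons b t c)]
    by_cases h : sg.sgn b = sg.sgn a
    · rw [if_pos h, ih, List.find?_cons_of_neg (by simp [h]), h]
    · rw [if_neg h, List.find?_cons_of_pos (by simpa using h)]
      rfl

theorem monotoneBE_Bst : JF.MonotoneBE (Bst JF sg) := by
  intro I x _ b₁ b₂ _ _ h₁ h₂ p _ hle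
  cases p with
  | nil => simpa only [Branch.prepend_nil] using hle
  | cons a t =>
    rw [Bst_prepend_cons t h₁, Bst_prepend_cons t h₂]
    cases t.find? fun y => sg.sgn y != sg.sgn a with
    | some y => exact le_rfl
    | none => split_ifs <;> simp [hle]

theorem Bst_prepend_congr {z : F} (p : List F) {c c' : Branch F} (hc : c.startsAt z)
    (hc' : c'.startsAt z) (h : Bst JF sg c = Bst JF sg c') :
    Bst JF sg (c.prepend p) = Bst JF sg (c'.prepend p) := by
  cases p with
  | nil => rwa [Branch.prepend_nil, Branch.prepend_nil]
  | cons a t => rw [Bst_prepend_cons t hc, Bst_prepend_cons t hc', h]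

theorem Bst_prepend_of_forall_sgn_eq {z : F} {p : List F} (hp : ∀ a ∈ p, sg.sgn a = sg.sgn z)
    {c : Branch F} (hc : c.startsAt z) : Bst JF sg (c.prepend p) = Bst JF sg c := by
  cases p with
  | nil => rw [Branch.prepend_nil]
  | cons a t =>
    have hfind : (t.find? fun y => sg.sgn y != sg.sgn a) = none :=
      List.find?_eq_none.2 fun y hy => by simp [hp y (by simp [hy]), hp a (by simp)]
    rw [Bst_prepend_cons t hc, hfind, Option.getD_none, if_pos (hp a (by simp)).symm]

theorem forall_sgn_eq_or_Bst_prepend_eq_cycle (x : F) (t : List F) :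
    (∀ a ∈ x :: t, sg.sgn a = sg.sgn x) ∨
      ∀ c : Branch F, c.startsAt x →
        Bst JF sg (c.prepend (x :: t)) = Bst JF sg (Branch.cycle x t) := by
  cases hfind : t.find? fun y => sg.sgn y != sg.sgn x with
  | none =>
    left
    intro a ha
    rcases List.mem_cons.1 ha with rfl | ha
    · rfl
    · simpa using List.find?_eq_none.1 hfind a ha
  | some y =>
    right
    intro c hc
    rw [← Branch.prepend_cycle, Bst_prepend_cons t hc,
      Bst_prepend_cons t (Branch.startsAt_cycle x t), hfind]
    rfl

theorem startsAt_prepend_flatten {x : F} {ls : List (List F)}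
    (hls : ∀ q ∈ ls, q.head? = some x) {c : Branch F} (hc : c.startsAt x) :
    (c.prepend ls.flatten).startsAt x := by
  cases ls with
  | nil => rwa [List.flatten_nil, Branch.prepend_nil]
  | cons q ls =>
    obtain ⟨t, rfl⟩ := List.head?_eq_some_iff.1 (hls q (List.mem_cons_self ..))
    exact Branch.startsAt_prepend_cons _ _ _

theorem Bst_prepend_flatten {x : F} {ls : List (List F)} (hls : ∀ q ∈ ls, q.head? = some x)
    {c : Branch F} (hc : c.startsAt x) :
    Bst JF sg (c.prepend ls.flatten) = Bst JF sg c ∨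
      ∃ t, x :: t ∈ ls ∧ Bst JF sg (c.prepend ls.flatten) = Bst JF sg (Branch.cycle x t) := by
  induction ls with
  | nil => exact Or.inl (by rw [List.flatten_nil, Branch.prepend_nil])
  | cons q ls ih =>
    obtain ⟨t, rfl⟩ := List.head?_eq_some_iff.1 (hls q (List.mem_cons_self ..))
    have hls' : ∀ q ∈ ls, q.head? = some x := fun q hq => hls q (List.mem_cons_of_mem _ hq)
    rw [List.flatten_cons, Branch.prepend_append]
    rcases forall_sgn_eq_or_Bst_prepend_eq_cycle (sg := sg) x t with hsgn | hcycle
    · rw [Bst_prepend_of_forall_sgn_eq hsgn (startsAt_prepend_flatten hls' hc)]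
      rcases ih hls' with heq | ⟨t', ht', heq⟩
      · exact Or.inl heq
      · exact Or.inr ⟨t', List.mem_cons_of_mem _ ht', heq⟩
    · exact Or.inr ⟨t, List.mem_cons_self .., hcycle _ (startsAt_prepend_flatten hls' hc)⟩

theorem IsConcat.Bst_inf_eq_or {x : F} {f : ℕ → List F} {s : Stream' F}
    (hf : ∀ i, (f i).head? = some x) (h : IsConcat f s) :
    (∀ a ∈ f 0, sg.sgn a = sg.sgn x) ∧
        Bst JF sg (.inf s) = Bst JF sg (.inf (Stream'.drop (f 0).length s)) ∨
      ∃ t, f 0 = x :: t ∧ Bst JF sg (.inf s) = Bst JF sg (Branch.cycle x t) := by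
  obtain ⟨t, ht⟩ := List.head?_eq_some_iff.1 (hf 0)
  have hstart : (Branch.inf (Stream'.drop (f 0).length s)).startsAt x := h.drop.startsAt (hf 1)
  have hs : Branch.inf s = (Branch.inf (Stream'.drop (f 0).length s)).prepend (f 0) := by
    rw [Branch.prepend_inf]
    exact congrArg _ h.eq_append
  rw [hs, ht]
  rcases forall_sgn_eq_or_Bst_prepend_eq_cycle (sg := sg) x t with hsgn | hcycle
  · exact Or.inl ⟨hsgn, Bst_prepend_of_forall_sgn_eq hsgn (ht ▸ hstart)⟩
  · exact Or.inr ⟨t, rfl, hcycle _ (ht ▸ hstart)⟩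

theorem exists_Bst_cycle_eq_of_mem_of_sgn_ne {x a : F} {f : ℕ → List F} {s : Stream' F}
    (hf : ∀ i, (f i).head? = some x) (h : IsConcat f s) {i : ℕ} (ha : a ∈ f i)
    (hsa : sg.sgn a ≠ sg.sgn x) :
    ∃ j t, f j = x :: t ∧ Bst JF sg (.inf s) = Bst JF sg (Branch.cycle x t) := by
  induction i generalizing f s with
  | zero =>
    rcases h.Bst_inf_eq_or hf with ⟨hsgn, -⟩ | ⟨t, ht, heq⟩
    · exact absurd (hsgn a ha) hsa
    · exact ⟨0, t, ht, heq⟩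
  | succ i ih =>
    rcases h.Bst_inf_eq_or hf with ⟨-, heq⟩ | ⟨t, ht, heq⟩
    · obtain ⟨j, t, hj, heq'⟩ := ih (fun i => hf (i + 1)) h.drop ha
      exact ⟨j + 1, t, hj, heq.trans heq'⟩
    · exact ⟨0, t, ht, heq⟩

theorem exists_Bst_cycle_eq_of_isConcat {x : F} {f : ℕ → List F} {s : Stream' F}
    (hf : ∀ i, (f i).head? = some x) (h : IsConcat f s) :
    ∃ j t, f j = x :: t ∧ Bst JF sg (.inf s) = Bst JF sg (Branch.cycle x t) := by
  by_cases hchange : ∃ i, ∃ a ∈ f i, sg.sgn a ≠ sg.sgn x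
  · obtain ⟨i, a, ha, hsa⟩ := hchange
    exact exists_Bst_cycle_eq_of_mem_of_sgn_ne hf h ha hsa
  · push Not at hchange
    obtain ⟨t, ht⟩ := List.head?_eq_some_iff.1 (hf 0)
    have hne : ∀ i, f i ≠ [] := fun i hi => by simpa [hi] using hf i
    have hcycle := (isConcat_cycle _ (List.cons_ne_nil x t)).forall_of_forall_mem
      (fun _ => List.cons_ne_nil x t) fun _ a ha => hchange 0 a (ht ▸ ha)
    refine ⟨0, t, ht, ?_⟩
    rw [Bst_inf_of_forall_sgn_eq (h.forall_of_forall_mem hne hchange), Branch.cycle,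
      Bst_inf_of_forall_sgn_eq hcycle]

theorem selectiveBE_Bst (I : Interp JF) : JF.SelectiveBE (Bst JF sg) I := by
  intro p _ x _ M N hM hN K hK b hb
  have hhead : ∀ q ∈ M ∪ N, q.head? = some x := fun q hq =>
    hq.elim (fun h => (hM q h).1) fun h => (hN q h).1
  have hcycle : ∀ t, x :: t ∈ M ∪ N →
      (Branch.cycle x t).prepend p ∈ OmegaSet p M ∪ OmegaSet p N ∪ PrepSet p K := fun t ht =>
    ht.elim (fun h => Or.inl (Or.inl ⟨_, cycle_mem_InfIter h, rfl⟩))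
      fun h => Or.inl (Or.inr ⟨_, cycle_mem_InfIter h, rfl⟩)
  suffices ∃ c ∈ OmegaSet p M ∪ OmegaSet p N ∪ PrepSet p K, Bst JF sg c = Bst JF sg b by
    obtain ⟨c, hc, hcb⟩ := this
    exact ⟨⟨c, hc, (congrArg I.val hcb).le⟩, ⟨c, hc, (congrArg I.val hcb).ge⟩⟩
  rcases hb with ⟨_, ⟨ls, hls, rfl⟩, k, hk, rfl⟩ | ⟨_, ⟨f, s, hf, -, hfs, rfl⟩, rfl⟩
  · have hlsx : ∀ q ∈ ls, q.head? = some x := fun q hq => hhead q (hls q hq)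
    have hkx := (hK k hk).2
    have hstart := startsAt_prepend_flatten hlsx hkx
    rw [Branch.prepend_append]
    rcases Bst_prepend_flatten (sg := sg) hlsx hkx with heq | ⟨t, ht, heq⟩
    · exact ⟨_, Or.inr ⟨k, hk, rfl⟩, Bst_prepend_congr p hkx hstart heq.symm⟩
    · exact ⟨_, hcycle t (hls _ ht),
        Bst_prepend_congr p (Branch.startsAt_cycle x t) hstart heq.symm⟩
  · obtain ⟨i, t, hi, heq⟩ :=
      exists_Bst_cycle_eq_of_isConcat (sg := sg) (fun i => hhead _ (hf i)) hfs
    exact ⟨_, hcycle t (hi ▸ hf i), Bst_prepend_congr p (Branch.startsAt_cycle x t)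
      (hfs.startsAt (hhead _ (hf 0))) heq.symm⟩

end

theorem stmt17 {F : Type} (JF : JFrame F) (sg : SignFn JF) :
    JF.MonotoneBE (Bst JF sg) ∧ ∀ I : Interp JF, JF.SelectiveBE (Bst JF sg) I :=
  ⟨monotoneBE_Bst, selectiveBE_Bst⟩

end JT
end
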